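/- Under the separable least-squares model assumptions, suppose B ⊆ Ω × ℝ^d is a convex set containing θ* = (x*, y*) on which the loss L is α-strongly convex for some α > 0 (i.e., ⟨H(θ)u, u⟩ ≥ α‖u‖² for all θ ∈ B and u ∈ ℝ^{p+d}), and suppose θ̂ = (x̂, ŷ) ∈ B is a critical point of L (∇L(θ̂) = 0). Then ‖θ̂ − θ*‖ ≤ ‖J(θ*)ᵀ w‖ / α, and consequently ρ(θ̂, θ*) ≤ √((σ₂‖y*‖ + σ₁)² + σ₁²) · ‖J(θ*)ᵀ w‖ / α. -/

import Mathlib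

/-!
Along the segment from `θ*` to `θ̂` the Hessian bound integrates (mean value theorem) to
`α‖θ̂ − θ*‖² ≤ ⟨∇L(θ̂) − ∇L(θ*), θ̂ − θ*⟩ = −⟨J(θ*)ᵀw, θ̂ − θ*⟩ ≤ ‖J(θ*)ᵀw‖‖θ̂ − θ*‖`,
since `∇L(θ̂) = 0` and the residual at `θ*` is `w`. The bound on `ρ` is then Cauchy–Schwarz in `ℝ²`
applied to `(‖x̂ − x*‖, ‖ŷ − y*‖)`, whose Euclidean norm is `‖θ̂ − θ*‖`.
-/

noncomputable section

abbrev EucSp (n : ℕ) : Type := EuclideanSpace ℝ (Fin n)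

abbrev ThetaSpace (p d : ℕ) : Type := WithLp 2 (EucSp p × EucSp d)

def thX {p d : ℕ} (θ : ThetaSpace p d) : EucSp p := (WithLp.equiv 2 (EucSp p × EucSp d) θ).1

def thY {p d : ℕ} (θ : ThetaSpace p d) : EucSp d := (WithLp.equiv 2 (EucSp p × EucSp d) θ).2

def thMk {p d : ℕ} (x : EucSp p) (y : EucSp d) : ThetaSpace p d :=
  (WithLp.equiv 2 (EucSp p × EucSp d)).symm (x, y)

/-- The residual `r(θ) = z − A(x) y` of the separable model. -/
def resid {p d N : ℕ} (A : EucSp p → (EucSp d →L[ℝ] EucSp N)) (z : EucSp N)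
    (θ : ThetaSpace p d) : EucSp N :=
  z - A (thX θ) (thY θ)

/-- The separable least-squares loss `L(θ) = ½‖z − A(x)y‖²`. -/
def loss {p d N : ℕ} (A : EucSp p → (EucSp d →L[ℝ] EucSp N)) (z : EucSp N)
    (θ : ThetaSpace p d) : ℝ :=
  (1 / 2) * ‖z - A (thX θ) (thY θ)‖ ^ 2

/-- The Hessian `H(θ) = ∇²L(θ)` of the loss, as a (continuous) bilinear form. -/
def hess {p d N : ℕ} (A : EucSp p → (EucSp d →L[ℝ] EucSp N)) (z : EucSp N)
    (θ : ThetaSpace p d) : ThetaSpace p d →L[ℝ] ThetaSpace p d →L[ℝ] ℝ :=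
  fderiv ℝ (fderiv ℝ (loss A z)) θ

open ContinuousLinearMap

section StrongConvexity

variable {E : Type*} [NormedAddCommGroup E] [NormedSpace ℝ E] {f : E → ℝ} {B : Set E} {α : ℝ}

theorem Convex.mul_sq_norm_sub_le_fderiv_sub_fderiv (hB : Convex ℝ B)
    (hf : Differentiable ℝ (fderiv ℝ f))
    (hsc : ∀ θ ∈ B, ∀ u, α * ‖u‖ ^ 2 ≤ fderiv ℝ (fderiv ℝ f) θ u u)
    {a b : E} (ha : a ∈ B) (hb : b ∈ B) :
    α * ‖b - a‖ ^ 2 ≤ fderiv ℝ f b (b - a) - fderiv ℝ f a (b - a) := by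
  set u := b - a
  have hderiv : ∀ t : ℝ, HasDerivAt (fun t : ℝ => fderiv ℝ f (a + t • u) u)
      (fderiv ℝ (fderiv ℝ f) (a + t • u) u u) t := by
    intro t
    have hline : HasDerivAt (fun t : ℝ => a + t • u) u t := by
      simpa using ((hasDerivAt_id t).smul_const u).const_add a
    simpa using ((hf _).hasFDerivAt.comp_hasDerivAt t hline).clm_apply (hasDerivAt_const t u)
  obtain ⟨c, hc, hslope⟩ := exists_hasDerivAt_eq_slope _ _ one_pos
    (fun t _ => (hderiv t).continuousAt.continuousWithinAt) (fun t _ => hderiv t)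
  have hcB : a + c • u ∈ B := by
    convert hB.add_smul_sub_mem ha hb ⟨hc.1.le, hc.2.le⟩ using 1
  have hc_bound := hsc _ hcB u
  rwa [hslope, sub_zero, div_one, one_smul, zero_smul, add_zero, add_sub_cancel] at hc_bound

theorem Convex.norm_sub_le_of_fderiv_eq_zero (hB : Convex ℝ B)
    (hf : Differentiable ℝ (fderiv ℝ f))
    (hsc : ∀ θ ∈ B, ∀ u, α * ‖u‖ ^ 2 ≤ fderiv ℝ (fderiv ℝ f) θ u u) (hα : 0 < α)
    {a b : E} (ha : a ∈ B) (hb : b ∈ B) (hcrit : fderiv ℝ f b = 0) :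
    ‖b - a‖ ≤ ‖fderiv ℝ f a‖ / α := by
  have hmono := hB.mul_sq_norm_sub_le_fderiv_sub_fderiv hf hsc ha hb
  rw [hcrit, zero_apply, zero_sub] at hmono
  have hbound : α * ‖b - a‖ ^ 2 ≤ ‖fderiv ℝ f a‖ * ‖b - a‖ :=
    hmono.trans ((neg_le_abs _).trans (by rw [← Real.norm_eq_abs]; exact le_opNorm _ _))
  rw [le_div_iff₀ hα]
  rcases (norm_nonneg (b - a)).eq_or_lt with h0 | hpos
  · rw [← h0, zero_mul]
    positivity
  · nlinarith

end StrongConvexity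

theorem fderiv_half_mul_sq_norm {E F : Type*} [NormedAddCommGroup E] [InnerProductSpace ℝ E]
    [CompleteSpace E] [NormedAddCommGroup F] [InnerProductSpace ℝ F] [CompleteSpace F]
    {r : E → F} {θ : E} (hr : DifferentiableAt ℝ r θ) :
    fderiv ℝ (fun θ => (1 / 2 : ℝ) * ‖r θ‖ ^ 2) θ = innerSL ℝ (adjoint (fderiv ℝ r θ) (r θ)) := by
  rw [(hr.hasFDerivAt.norm_sq.const_mul (1 / 2 : ℝ)).fderiv]
  ext u
  simp [adjoint_inner_left, two_smul]
  ring

theorem mul_add_mul_le_sqrt_mul_sqrt (a b c d : ℝ) :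
    a * c + b * d ≤ √(a ^ 2 + b ^ 2) * √(c ^ 2 + d ^ 2) := by
  rw [← Real.sqrt_mul (by positivity)]
  refine (le_abs_self _).trans (Real.abs_le_sqrt ?_)
  nlinarith [sq_nonneg (a * d - b * c)]

theorem WithLp.mul_norm_fst_add_mul_norm_snd_le {E F : Type*} [SeminormedAddCommGroup E]
    [SeminormedAddCommGroup F] (θ : WithLp 2 (E × F)) (a b : ℝ) :
    a * ‖θ.fst‖ + b * ‖θ.snd‖ ≤ √(a ^ 2 + b ^ 2) * ‖θ‖ := by
  calc a * ‖θ.fst‖ + b * ‖θ.snd‖ ≤ √(a ^ 2 + b ^ 2) * √(‖θ.fst‖ ^ 2 + ‖θ.snd‖ ^ 2) :=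
        mul_add_mul_le_sqrt_mul_sqrt _ _ _ _
    _ = √(a ^ 2 + b ^ 2) * ‖θ‖ := by
        rw [← WithLp.prod_norm_sq_eq_of_L2, Real.sqrt_sq (norm_nonneg _)]

theorem contDiff_resid {p d N : ℕ} {n : WithTop ℕ∞} {A : EucSp p → (EucSp d →L[ℝ] EucSp N)}
    (hA : ContDiff ℝ n A) (z : EucSp N) : ContDiff ℝ n (resid A z) := by
  have hX : ContDiff ℝ n (thX : ThetaSpace p d → EucSp p) :=
    (WithLp.fstL 2 ℝ (EucSp p) (EucSp d)).contDiff
  have hY : ContDiff ℝ n (thY : ThetaSpace p d → EucSp d) :=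
    (WithLp.sndL 2 ℝ (EucSp p) (EucSp d)).contDiff
  exact contDiff_const.sub ((hA.comp hX).clm_apply hY)

theorem resid_thMk {p d N : ℕ} (A : EucSp p → (EucSp d →L[ℝ] EucSp N)) (x : EucSp p)
    (y : EucSp d) (w : EucSp N) : resid A (A x y + w) (thMk x y) = w :=
  add_sub_cancel_left _ _

theorem stability_of_least_squares_general
    {p d N : ℕ}
    (A : EucSp p → (EucSp d →L[ℝ] EucSp N)) (hA : ContDiff ℝ 3 A)
    (σ1 σ2 : ℝ)
    (xs : EucSp p) (ys : EucSp d) (w : EucSp N)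
    -- the convex set B ⊆ Ω × ℝ^d containing θ*, on which L is α-strongly convex
    (B : Set (ThetaSpace p d)) (hBconv : Convex ℝ B)
    (hθsB : thMk xs ys ∈ B)
    (α : ℝ) (hα : 0 < α)
    (hsc : ∀ θ ∈ B, ∀ u : ThetaSpace p d,
      α * ‖u‖ ^ 2 ≤ hess A (A xs ys + w) θ u u)
    -- the critical point θ̂ ∈ B
    (θhat : ThetaSpace p d) (hθhatB : θhat ∈ B)
    (hcrit : fderiv ℝ (loss A (A xs ys + w)) θhat = 0) :
    ‖θhat - thMk xs ys‖
        ≤ ‖ContinuousLinearMap.adjoint (fderiv ℝ (resid A (A xs ys + w)) (thMk xs ys)) w‖ / α ∧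
      (σ2 * ‖ys‖ + σ1) * ‖thX θhat - xs‖ + σ1 * ‖thY θhat - ys‖
        ≤ Real.sqrt ((σ2 * ‖ys‖ + σ1) ^ 2 + σ1 ^ 2) *
            ‖ContinuousLinearMap.adjoint (fderiv ℝ (resid A (A xs ys + w)) (thMk xs ys)) w‖ / α := by
  set z := A xs ys + w
  set g := adjoint (fderiv ℝ (resid A z) (thMk xs ys)) w with hg
  have hresid : ContDiff ℝ 2 (resid A z) := contDiff_resid (hA.of_le (by norm_num)) z
  have hloss : ContDiff ℝ 2 (loss A z) := contDiff_const.mul (hresid.norm_sq ℝ)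
  have hgrad : fderiv ℝ (loss A z) (thMk xs ys) = innerSL ℝ g := by
    rw [hg, ← resid_thMk A xs ys w]
    exact fderiv_half_mul_sq_norm ((hresid.differentiable (by norm_num)) _)
  have hdist : ‖θhat - thMk xs ys‖ ≤ ‖g‖ / α := by
    have hL : Differentiable ℝ (fderiv ℝ (loss A z)) :=
      (hloss.fderiv_right le_rfl).differentiable one_ne_zero
    simpa only [hgrad, innerSL_apply_norm (𝕜 := ℝ)] using
      hBconv.norm_sub_le_of_fderiv_eq_zero hL hsc hα hθsB hθhatB hcrit
  refine ⟨hdist, ?_⟩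
  calc (σ2 * ‖ys‖ + σ1) * ‖thX θhat - xs‖ + σ1 * ‖thY θhat - ys‖
      ≤ √((σ2 * ‖ys‖ + σ1) ^ 2 + σ1 ^ 2) * ‖θhat - thMk xs ys‖ :=
        (θhat - thMk xs ys).mul_norm_fst_add_mul_norm_snd_le _ _
    _ ≤ √((σ2 * ‖ys‖ + σ1) ^ 2 + σ1 ^ 2) * (‖g‖ / α) := by gcongr
    _ = _ := (mul_div_assoc _ _ _).symm

/-- **Stability of least-squares recovery.**  If `L` is `α`-strongly convex on a convex set `B`
containing `θ*` and `θ̂ ∈ B` is a critical point of `L`, then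
`‖θ̂ − θ*‖ ≤ ‖J(θ*)ᵀ w‖/α` and
`ρ(θ̂, θ*) ≤ √((σ₂‖y*‖ + σ₁)² + σ₁²)·‖J(θ*)ᵀ w‖/α`. -/
theorem stability_of_least_squares
    {p d N : ℕ}
    (Ω : Set (EucSp p)) (hΩconv : Convex ℝ Ω) (hΩcomp : IsCompact Ω)
    (A : EucSp p → (EucSp d →L[ℝ] EucSp N)) (hA : ContDiff ℝ 3 A)
    (σ0 σ1 σ2 σ3 : ℝ)
    (hσ0 : ∀ x ∈ Ω, ‖A x‖ ≤ σ0)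
    (hσ1 : ∀ x ∈ Ω, ‖iteratedFDeriv ℝ 1 A x‖ ≤ σ1)
    (hσ2 : ∀ x ∈ Ω, ‖iteratedFDeriv ℝ 2 A x‖ ≤ σ2)
    (hσ3 : ∀ x ∈ Ω, ‖iteratedFDeriv ℝ 3 A x‖ ≤ σ3)
    (xs : EucSp p) (hxs : xs ∈ Ω) (ys : EucSp d) (w : EucSp N)
    -- the convex set B ⊆ Ω × ℝ^d containing θ*, on which L is α-strongly convex
    (B : Set (ThetaSpace p d)) (hBconv : Convex ℝ B)
    (hBΩ : ∀ θ ∈ B, thX θ ∈ Ω)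
    (hθsB : thMk xs ys ∈ B)
    (α : ℝ) (hα : 0 < α)
    (hsc : ∀ θ ∈ B, ∀ u : ThetaSpace p d,
      α * ‖u‖ ^ 2 ≤ hess A (A xs ys + w) θ u u)
    -- the critical point θ̂ ∈ B
    (θhat : ThetaSpace p d) (hθhatB : θhat ∈ B)
    (hcrit : fderiv ℝ (loss A (A xs ys + w)) θhat = 0) :
    ‖θhat - thMk xs ys‖
        ≤ ‖ContinuousLinearMap.adjoint (fderiv ℝ (resid A (A xs ys + w)) (thMk xs ys)) w‖ / α ∧
      (σ2 * ‖ys‖ + σ1) * ‖thX θhat - xs‖ + σ1 * ‖thY θhat - ys‖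
        ≤ Real.sqrt ((σ2 * ‖ys‖ + σ1) ^ 2 + σ1 ^ 2) *
            ‖ContinuousLinearMap.adjoint (fderiv ℝ (resid A (A xs ys + w)) (thMk xs ys)) w‖ / α :=
  stability_of_least_squares_general A hA σ1 σ2 xs ys w B hBconv hθsB α hα hsc θhat hθhatB hcrit
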